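/- arXiv:2110.05898 — 2 statements merged into one kernel-verified Lean document; each statement's English description precedes it below -/
import Mathlib

section
/- Let C be a triangulated category endowed with a weight structure w and an adjacent t-structure t (meaning C_{w≥0} = C_{t≥0}), and let m ≤ n. Then the pair (C_{w∉[m,n]}, C[m,n]) is a torsion theory: C_{w∉[m,n]}^⊥ = C[m,n], ^⊥(C[m,n]) = C_{w∉[m,n]}, and every object M fits into a distinguished triangle L → M → R → L[1] with L ∈ C_{w∉[m,n]} and R ∈ C[m,n]. -/
open CategoryTheory CategoryTheory.Limits CategoryTheory.Pretriangulated Opposite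

universe v u

variable (C : Type u) [Category.{v} C] [Preadditive C] [HasZeroObject C]
  [HasShift C ℤ] [∀ n : ℤ, (shiftFunctor C n).Additive] [Pretriangulated C]

/-- A weight structure on the triangulated category `C`. -/
structure WeightStructure where
  /-- the class `C_{w ≤ n}` -/
  le : ℤ → Set C
  /-- the class `C_{w ≥ n}` -/
  ge : ℤ → Set C
  le_iso_closed : ∀ (n : ℤ) (X Y : C), (X ≅ Y) → X ∈ le n → Y ∈ le n
  ge_iso_closed : ∀ (n : ℤ) (X Y : C), (X ≅ Y) → X ∈ ge n → Y ∈ ge n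
  le_retract : ∀ (n : ℤ) (X Y : C) (a : X ⟶ Y) (b : Y ⟶ X),
    a ≫ b = 𝟙 X → Y ∈ le n → X ∈ le n
  ge_retract : ∀ (n : ℤ) (X Y : C) (a : X ⟶ Y) (b : Y ⟶ X),
    a ≫ b = 𝟙 X → Y ∈ ge n → X ∈ ge n
  le_shift : ∀ (n k : ℤ) (X : C), X ∈ le n → X⟦k⟧ ∈ le (n + k)
  ge_shift : ∀ (n k : ℤ) (X : C), X ∈ ge n → X⟦k⟧ ∈ ge (n + k)
  le_mono : ∀ n : ℤ, le n ⊆ le (n + 1)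
  ge_anti : ∀ n : ℤ, ge (n + 1) ⊆ ge n
  orth : ∀ (n : ℤ) (X Y : C), X ∈ le n → Y ∈ ge (n + 1) → ∀ f : X ⟶ Y, f = 0
  decomp : ∀ (X : C) (k : ℤ), ∃ (A B : C) (x : A ⟶ X) (y : X ⟶ B) (δ : B ⟶ A⟦(1 : ℤ)⟧),
    (Triangle.mk x y δ ∈ distTriang C) ∧ A ∈ le k ∧ B ∈ ge (k + 1)

variable {C}

/-- `(A, B, x, y)` is a `k`-weight decomposition of `X`. -/
def WeightStructure.IsWeightDecomp (w : WeightStructure C) (k : ℤ) {X : C} (A B : C)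
    (x : A ⟶ X) (y : X ⟶ B) : Prop :=
  (∃ δ : B ⟶ A⟦(1 : ℤ)⟧, Triangle.mk x y δ ∈ distTriang C) ∧ A ∈ w.le k ∧ B ∈ w.ge (k + 1)

/-- `g : M ⟶ N` kills weights `m, …, n`. -/
def WeightStructure.KillsWeights (w : WeightStructure C) (m n : ℤ) {M N : C}
    (g : M ⟶ N) : Prop :=
  ∃ (A A' B B' : C) (x : A ⟶ M) (x' : M ⟶ A') (y' : B ⟶ N) (y : N ⟶ B'),
    w.IsWeightDecomp n A A' x x' ∧ w.IsWeightDecomp (m - 1) B B' y' y ∧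
      x ≫ g ≫ y = 0

/-- The class of objects of `C` without weights `m, …, n`. -/
def WeightStructure.without (w : WeightStructure C) (m n : ℤ) : Set C :=
  {M : C | w.KillsWeights m n (𝟙 M)}


/-- A `t`-structure on the triangulated category `C` (cohomological conventions,
with `le n = C_{t ≤ n}` and `ge n = C_{t ≥ n}`). -/
structure TStructure (C : Type u) [Category.{v} C] [Preadditive C] [HasZeroObject C]
    [HasShift C ℤ] [∀ n : ℤ, (shiftFunctor C n).Additive] [Pretriangulated C] where
  le : ℤ → Set C
  ge : ℤ → Set C
  le_iso_closed : ∀ (n : ℤ) (X Y : C), (X ≅ Y) → X ∈ le n → Y ∈ le n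
  ge_iso_closed : ∀ (n : ℤ) (X Y : C), (X ≅ Y) → X ∈ ge n → Y ∈ ge n
  le_shift : ∀ (n k : ℤ) (X : C), X ∈ le n → X⟦k⟧ ∈ le (n + k)
  ge_shift : ∀ (n k : ℤ) (X : C), X ∈ ge n → X⟦k⟧ ∈ ge (n + k)
  le_mono : ∀ n : ℤ, le n ⊆ le (n + 1)
  ge_anti : ∀ n : ℤ, ge (n + 1) ⊆ ge n
  orth : ∀ (n : ℤ) (X Y : C), X ∈ ge (n + 1) → Y ∈ le n → ∀ f : X ⟶ Y, f = 0
  decomp : ∀ (X : C) (n : ℤ), ∃ (A B : C) (x : A ⟶ X) (y : X ⟶ B) (δ : B ⟶ A⟦(1 : ℤ)⟧),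
    (Triangle.mk x y δ ∈ distTriang C) ∧ A ∈ ge (n + 1) ∧ B ∈ le n

/-- The class of objects right-orthogonal to `S`. -/
def rightOrth (S : Set C) : Set C := {Y : C | ∀ X ∈ S, ∀ f : X ⟶ Y, f = 0}

/-- The class of objects left-orthogonal to `S`. -/
def leftOrth (S : Set C) : Set C := {X : C | ∀ Y ∈ S, ∀ f : X ⟶ Y, f = 0}

/-! Adjacency shifts to `C_{w ≥ k} = C_{t ≥ k}` for all `k`. If `M` has no weights `m, …, n`, a
map `f : M ⟶ Y` with `Y ∈ C[m,n]` kills `w_{≤ m-1} M` (as `Y ∈ C_{w ≥ m}`), hence `w_{≤ n} M`, so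
it factors through `w_{≥ n+1} M ∈ C_{t ≥ n+1}`, which is orthogonal to `Y ∈ C_{t ≤ n}`. Conversely,
if `M` is left orthogonal to `C[m,n]`, a composite `w_{≤ n} M ⟶ M ⟶ w_{≥ m} M` factors through
`τ_{≥ n+1} (w_{≥ m} M)` and so vanishes by weight orthogonality. The decomposition of `M` is the
cocone `L` of `M ⟶ R := τ_{≤ n} (w_{≥ m} M) ∈ C[m,n]`: maps from `M` to `Y ∈ C[m,n]` factor through
`R`, maps from `R` to `Y⟦1⟧` are detected on `M`, and together these make `L` left orthogonal to
`C[m,n]`. -/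

open CategoryTheory CategoryTheory.Limits CategoryTheory.Pretriangulated CategoryTheory.Category
  CategoryTheory.Preadditive

lemma mem_iff_shift_neg_mem_zero {D : Type*} [Category D] [HasShift D ℤ] {S : ℤ → Set D}
    (hiso : ∀ (n : ℤ) (X Y : D), (X ≅ Y) → X ∈ S n → Y ∈ S n)
    (hshift : ∀ (n k : ℤ) (X : D), X ∈ S n → X⟦k⟧ ∈ S (n + k)) (k : ℤ) (X : D) :
    X ∈ S k ↔ X⟦-k⟧ ∈ S 0 := by
  refine ⟨fun hX => by simpa using hshift k (-k) X hX, fun hX => ?_⟩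
  exact hiso k _ X ((shiftFunctorCompIsoId D (-k) k (by omega)).app X)
    (by simpa using hshift 0 k _ hX)

lemma shift_map_eq_zero {D : Type*} [Category D] [Preadditive D] [HasShift D ℤ]
    [∀ n : ℤ, (shiftFunctor D n).Additive] {X Y : D} (h : ∀ f : X ⟶ Y, f = 0) (k : ℤ)
    (g : X⟦k⟧ ⟶ Y⟦k⟧) : g = 0 := by
  rw [← (shiftFunctor D k).map_preimage g, h ((shiftFunctor D k).preimage g), Functor.map_zero]

lemma Triangle.eq_zero_of_mor₂_comp_eq_zero (T : Triangle C) (hT : T ∈ distTriang C) {Z : C}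
    (hZ : ∀ g : T.obj₁⟦(1 : ℤ)⟧ ⟶ Z, g = 0) {φ : T.obj₃ ⟶ Z} (hφ : T.mor₂ ≫ φ = 0) : φ = 0 := by
  obtain ⟨g, rfl⟩ := Triangle.yoneda_exact₃ T hT φ hφ
  rw [hZ g, comp_zero]

/-- `f⟦1⟧` is killed by `mor₃`, hence factors as `-(mor₁⟦1⟧) ≫ g⟦1⟧`, and `mor₁ ≫ g = 0`. -/
lemma Triangle.hom_obj₁_eq_zero (T : Triangle C) (hT : T ∈ distTriang C) {Y : C}
    (hfac : ∀ g : T.obj₂ ⟶ Y, ∃ e : T.obj₃ ⟶ Y, g = T.mor₂ ≫ e)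
    (hinj : ∀ φ : T.obj₃ ⟶ Y⟦(1 : ℤ)⟧, T.mor₂ ≫ φ = 0 → φ = 0) (f : T.obj₁ ⟶ Y) : f = 0 := by
  have hθ : T.mor₃ ≫ f⟦(1 : ℤ)⟧' = 0 :=
    hinj _ (by rw [comp_distTriang_mor_zero₂₃_assoc _ hT, zero_comp])
  obtain ⟨h, hh⟩ : ∃ h : T.obj₂⟦(1 : ℤ)⟧ ⟶ Y⟦(1 : ℤ)⟧,
      f⟦(1 : ℤ)⟧' = (-(T.mor₁⟦(1 : ℤ)⟧')) ≫ h :=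
    Triangle.yoneda_exact₃ _ (rot_of_distTriang _ hT) _ hθ
  obtain ⟨e, he⟩ := hfac ((shiftFunctor C (1 : ℤ)).preimage h)
  have hmor₁ : T.mor₁ ≫ (shiftFunctor C (1 : ℤ)).preimage h = 0 := by
    rw [he, comp_distTriang_mor_zero₁₂_assoc _ hT, zero_comp]
  apply (shiftFunctor C (1 : ℤ)).map_injective
  rw [hh, Functor.map_zero, neg_comp, ← (shiftFunctor C (1 : ℤ)).map_preimage h,
    ← Functor.map_comp, hmor₁, Functor.map_zero, neg_zero]

namespace TStructure

variable (t : TStructure C)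

lemma le_monotone : Monotone t.le := monotone_int_of_le_succ t.le_mono

lemma ge_antitone : Antitone t.ge := antitone_int_of_succ_le t.ge_anti

lemma mem_le_of_forall_hom_eq_zero {n : ℤ} {Y : C}
    (h : ∀ X ∈ t.ge (n + 1), ∀ f : X ⟶ Y, f = 0) : Y ∈ t.le n := by
  obtain ⟨P, Q, α, β, δ, hT, hP, hQ⟩ := t.decomp Y n
  have hP₀ : IsZero P := by
    rw [IsZero.iff_id_eq_zero]
    obtain ⟨g, hg⟩ := Triangle.coyoneda_exact₂ _ (inv_rot_of_distTriang _ hT) (𝟙 P)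
      ((id_comp α).trans (h P hP α))
    have hg₀ : g = 0 := t.orth n P _ hP (t.le_monotone (by omega) (t.le_shift n (-1) Q hQ)) g
    exact hg.trans (by rw [hg₀]; exact zero_comp)
  have : IsIso β := (Triangle.isZero₁_iff_isIso₂ _ hT).1 hP₀
  exact t.le_iso_closed n Q Y (asIso β).symm hQ

lemma mem_ge_of_forall_hom_eq_zero {m : ℤ} {Y : C}
    (h : ∀ W ∈ t.le (m - 1), ∀ f : Y ⟶ W, f = 0) : Y ∈ t.ge m := by
  obtain ⟨P, Q, α, β, δ, hT, hP, hQ⟩ := t.decomp Y (m - 1)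
  rw [sub_add_cancel] at hP
  have hQ₀ : IsZero Q := by
    rw [IsZero.iff_id_eq_zero]
    obtain ⟨g, hg⟩ := Triangle.yoneda_exact₃ _ hT (𝟙 Q) ((comp_id β).trans (h Q hQ β))
    have hg₀ : g = 0 := t.orth (m - 1) _ Q (t.ge_antitone (by omega) (t.ge_shift m 1 P hP)) hQ g
    exact hg.trans (by rw [hg₀]; exact comp_zero)
  have : IsIso α := (Triangle.isZero₃_iff_isIso₁ _ hT).1 hQ₀
  exact t.ge_iso_closed m P Y (asIso α) hP

lemma ge_ext₂ {k : ℤ} (T : Triangle C) (hT : T ∈ distTriang C)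
    (h₁ : T.obj₁ ∈ t.ge k) (h₃ : T.obj₃ ∈ t.ge k) : T.obj₂ ∈ t.ge k := by
  refine t.mem_ge_of_forall_hom_eq_zero fun W hW f => ?_
  rw [← sub_add_cancel k 1] at h₁ h₃
  obtain ⟨g, rfl⟩ := Triangle.yoneda_exact₂ _ hT f (t.orth _ _ W h₁ hW _)
  rw [t.orth _ _ W h₃ hW g, comp_zero]

lemma exists_distTriang_of_mem_ge {m n : ℤ} (hmn : m ≤ n) {X : C} (hX : X ∈ t.ge m) :
    ∃ (A B : C) (u : A ⟶ X) (v : X ⟶ B) (δ : B ⟶ A⟦(1 : ℤ)⟧),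
      Triangle.mk u v δ ∈ distTriang C ∧ A ∈ t.ge (n + 1) ∧ B ∈ t.le n ∩ t.ge m := by
  obtain ⟨A, B, u, v, δ, hT, hA, hB⟩ := t.decomp X n
  refine ⟨A, B, u, v, δ, hT, hA, hB, t.ge_ext₂ _ (rot_of_distTriang _ hT) hX ?_⟩
  exact t.ge_antitone (by omega) (t.ge_shift _ 1 A hA)

end TStructure

namespace WeightStructure

variable (w : WeightStructure C)

lemma mem_ge_of_forall_hom_eq_zero {m : ℤ} {Y : C}
    (h : ∀ Z ∈ w.le (m - 1), ∀ f : Z ⟶ Y, f = 0) : Y ∈ w.ge m := by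
  obtain ⟨A, B, x, y, δ, hT, hA, hB⟩ := w.decomp Y (m - 1)
  rw [sub_add_cancel] at hB
  obtain ⟨g, hg⟩ := Triangle.yoneda_exact₂ _ hT (𝟙 Y) ((comp_id x).trans (h A hA x))
  exact w.ge_retract m Y B y g hg.symm hB

lemma ge_eq_of_ge_zero_eq (t : TStructure C) (adj : w.ge 0 = t.ge 0) (k : ℤ) :
    w.ge k = t.ge k := by
  ext X
  rw [mem_iff_shift_neg_mem_zero w.ge_iso_closed w.ge_shift,
    mem_iff_shift_neg_mem_zero t.ge_iso_closed t.ge_shift, adj]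

lemma mem_without_of_forall_comp_eq_zero {m n : ℤ} {M : C}
    (h : ∀ ⦃A B : C⦄ (x : A ⟶ M) (y : M ⟶ B), A ∈ w.le n → B ∈ w.ge m → x ≫ y = 0) :
    M ∈ w.without m n := by
  obtain ⟨A, A', x, x', δ₁, hT₁, hA, hA'⟩ := w.decomp M n
  obtain ⟨B, B', y', y, δ₂, hT₂, hB, hB'⟩ := w.decomp M (m - 1)
  refine ⟨A, A', B, B', x, x', y', y, ⟨⟨δ₁, hT₁⟩, hA, hA'⟩, ⟨⟨δ₂, hT₂⟩, hB, hB'⟩, ?_⟩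
  rw [id_comp]
  exact h x y hA (by simpa using hB')

lemma mem_without_of_mem_ge {m n : ℤ} {M : C} (hM : M ∈ w.ge (n + 1)) : M ∈ w.without m n :=
  w.mem_without_of_forall_comp_eq_zero fun _ _ x _ hA _ => by
    rw [w.orth n _ M hA hM x, zero_comp]

lemma mem_without_of_mem_le {m n : ℤ} {M : C} (hM : M ∈ w.le (m - 1)) : M ∈ w.without m n :=
  w.mem_without_of_forall_comp_eq_zero fun _ _ _ y _ hB => by
    rw [w.orth (m - 1) M _ hM (by simpa using hB) y, comp_zero]

variable (t : TStructure C)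

lemma without_subset_leftOrth (adj : w.ge 0 = t.ge 0) {m n : ℤ} :
    w.without m n ⊆ leftOrth (t.le n ∩ t.ge m) := by
  rintro M ⟨A, A', B, B', x, x', y', y, ⟨⟨δ₁, hT₁⟩, -, hA'⟩, ⟨⟨δ₂, hT₂⟩, hB, -⟩, hxy⟩
    Y ⟨hYle, hYge⟩ f
  rw [id_comp] at hxy
  obtain ⟨g, hg⟩ : ∃ g : A ⟶ B, x = g ≫ y' := Triangle.coyoneda_exact₂ _ hT₂ x hxy
  have hy'f : y' ≫ f = 0 :=
    w.orth (m - 1) B Y hB (by rwa [sub_add_cancel, w.ge_eq_of_ge_zero_eq t adj]) _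
  have hxf : x ≫ f = 0 := by rw [hg, assoc, hy'f, comp_zero]
  obtain ⟨h, hh⟩ : ∃ h : A' ⟶ Y, f = x' ≫ h := Triangle.yoneda_exact₂ _ hT₁ f hxf
  rw [w.ge_eq_of_ge_zero_eq t adj] at hA'
  rw [hh, t.orth n A' Y hA' hYle h, comp_zero]

lemma leftOrth_subset_without (adj : w.ge 0 = t.ge 0) {m n : ℤ} (hmn : m ≤ n) :
    leftOrth (t.le n ∩ t.ge m) ⊆ w.without m n := by
  refine fun M hM => w.mem_without_of_forall_comp_eq_zero fun A B x y hA hB => ?_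
  rw [w.ge_eq_of_ge_zero_eq t adj] at hB
  obtain ⟨A'', B'', u, v, δ, hT, hA'', hB''⟩ := t.exists_distTriang_of_mem_ge hmn hB
  obtain ⟨s, hs⟩ : ∃ s : M ⟶ A'', y = s ≫ u := Triangle.coyoneda_exact₂ _ hT y (hM B'' hB'' _)
  rw [← w.ge_eq_of_ge_zero_eq t adj] at hA''
  rw [hs, ← assoc, w.orth n A A'' hA hA'' (x ≫ s), zero_comp]

lemma rightOrth_without_subset (adj : w.ge 0 = t.ge 0) {m n : ℤ} :
    rightOrth (w.without m n) ⊆ t.le n ∩ t.ge m := by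
  refine fun Y hY => ⟨t.mem_le_of_forall_hom_eq_zero fun X hX => ?_, ?_⟩
  · rw [← w.ge_eq_of_ge_zero_eq t adj] at hX
    exact hY X (w.mem_without_of_mem_ge hX)
  · rw [← w.ge_eq_of_ge_zero_eq t adj]
    exact w.mem_ge_of_forall_hom_eq_zero fun Z hZ => hY Z (w.mem_without_of_mem_le hZ)

lemma exists_distTriang_mem_without (adj : w.ge 0 = t.ge 0) {m n : ℤ} (hmn : m ≤ n) (M : C) :
    ∃ (L R : C) (a : L ⟶ M) (b : M ⟶ R) (δ : R ⟶ L⟦(1 : ℤ)⟧),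
      Triangle.mk a b δ ∈ distTriang C ∧ L ∈ w.without m n ∧ R ∈ t.le n ∩ t.ge m := by
  obtain ⟨B, B', j, π, δ₁, hT₁, hB, hB'⟩ := w.decomp M (m - 1)
  rw [sub_add_cancel, w.ge_eq_of_ge_zero_eq t adj] at hB'
  obtain ⟨A, R, u, v, δ₂, hT₂, hA, hR⟩ := t.exists_distTriang_of_mem_ge hmn hB'
  obtain ⟨L, a, θ, hT⟩ := distinguished_cocone_triangle₁ (π ≫ v)
  refine ⟨L, R, a, π ≫ v, θ, hT, w.leftOrth_subset_without t adj hmn fun Y hY => ?_, hR⟩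
  have hYw : Y ∈ w.ge (m - 1 + 1) := by
    rw [sub_add_cancel, w.ge_eq_of_ge_zero_eq t adj]
    exact hY.2
  refine Triangle.hom_obj₁_eq_zero _ hT (fun g => ?_) (fun φ hφ => ?_)
  · obtain ⟨e, rfl⟩ := Triangle.yoneda_exact₂ _ hT₁ g (w.orth _ B Y hB hYw _)
    obtain ⟨e', rfl⟩ := Triangle.yoneda_exact₂ _ hT₂ e (t.orth n A Y hA hY.1 _)
    exact ⟨e', (assoc _ _ _).symm⟩
  · have hvφ : v ≫ φ = 0 := Triangle.eq_zero_of_mor₂_comp_eq_zero _ hT₁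
      (shift_map_eq_zero (w.orth _ B Y hB hYw) 1) ((assoc π v φ).symm.trans hφ)
    exact Triangle.eq_zero_of_mor₂_comp_eq_zero _ hT₂
      (shift_map_eq_zero (t.orth n A Y hA hY.1) 1) hvφ

end WeightStructure

/-- For adjacent `w` and `t`, the pair `(C_{w ∉ [m,n]}, C[m,n])` is a torsion
theory. -/
theorem stmt10 (w : WeightStructure C) (t : TStructure C)
    (adj : w.ge 0 = t.ge 0) (m n : ℤ) (hmn : m ≤ n) :
    rightOrth (w.without m n) = t.le n ∩ t.ge m ∧
    leftOrth (t.le n ∩ t.ge m) = w.without m n ∧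
    ∀ M : C, ∃ (L R : C) (a : L ⟶ M) (b : M ⟶ R) (δ : R ⟶ L⟦(1 : ℤ)⟧),
      (Triangle.mk a b δ ∈ distTriang C) ∧ L ∈ w.without m n ∧
        R ∈ t.le n ∩ t.ge m := by
  have hleft := w.without_subset_leftOrth t adj (m := m) (n := n)
  refine ⟨(w.rightOrth_without_subset t adj).antisymm fun Y hY X hX => hleft hX Y hY,
    (w.leftOrth_subset_without t adj hmn).antisymm hleft,
    w.exists_distTriang_mem_without t adj hmn⟩
end

section
/- Let C be a triangulated category with a weight structure w, and suppose C is closed under small coproducts. Then the class C_{w∉[m,n]} of objects without weights m,...,n is closed under retracts: if M is a retract of N and N is without weights m,...,n, then so is M. -/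
open CategoryTheory CategoryTheory.Limits CategoryTheory.Pretriangulated Opposite

universe v u

variable (C : Type u) [Category.{v} C] [Preadditive C] [HasZeroObject C]
  [HasShift C ℤ] [∀ n : ℤ, (shiftFunctor C n).Additive] [Pretriangulated C]

variable {C}

/-! A weight decomposition `A → M → A'` at level `n` is universal for maps out of `C_{w ≤ n}`,
and one at level `m - 1` is universal for maps into `C_{w ≥ m}`, by orthogonality and the
exactness of the triangle. Hence if `M` is a retract of `N`, the composite
`A → M → N → N → M → B'` factors through `A_N → N → B'_N`, which vanishes. -/

namespace WeightStructure

variable (w : WeightStructure C)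

theorem exists_isWeightDecomp (X : C) (k : ℤ) :
    ∃ (A B : C) (x : A ⟶ X) (y : X ⟶ B), w.IsWeightDecomp k A B x y := by
  obtain ⟨A, B, x, y, δ, hT, hA, hB⟩ := w.decomp X k
  exact ⟨A, B, x, y, ⟨δ, hT⟩, hA, hB⟩

variable {w}

theorem IsWeightDecomp.exists_lift {k : ℤ} {X A A' P : C} {x : A ⟶ X} {x' : X ⟶ A'}
    (hX : w.IsWeightDecomp k A A' x x') (hP : P ∈ w.le k) (f : P ⟶ X) :
    ∃ u : P ⟶ A, u ≫ x = f := by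
  obtain ⟨⟨δ, hT⟩, -, hA'⟩ := hX
  obtain ⟨u, hu⟩ := Triangle.coyoneda_exact₂ _ hT f (w.orth k P A' hP hA' _)
  exact ⟨u, hu.symm⟩

theorem IsWeightDecomp.exists_desc {k : ℤ} {X B B' Q : C} {y' : B ⟶ X} {y : X ⟶ B'}
    (hX : w.IsWeightDecomp k B B' y' y) (hQ : Q ∈ w.ge (k + 1)) (f : X ⟶ Q) :
    ∃ v : B' ⟶ Q, y ≫ v = f := by
  obtain ⟨⟨δ, hT⟩, hB, -⟩ := hX
  obtain ⟨v, hv⟩ := Triangle.yoneda_exact₂ _ hT f (w.orth k B Q hB hQ _)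
  exact ⟨v, hv.symm⟩

theorem KillsWeights.comp_comp {m n : ℤ} {M X Y N : C} {g : X ⟶ Y}
    (hg : w.KillsWeights m n g) (f : M ⟶ X) (h : Y ⟶ N) :
    w.KillsWeights m n (f ≫ g ≫ h) := by
  obtain ⟨AX, AX', BY, BY', xX, xX', yY', yY, hX, hY, hg⟩ := hg
  obtain ⟨A, A', x, x', hM⟩ := w.exists_isWeightDecomp M n
  obtain ⟨B, B', y', y, hN⟩ := w.exists_isWeightDecomp N (m - 1)
  refine ⟨A, A', B, B', x, x', y', y, hM, hN, ?_⟩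
  obtain ⟨u, hu⟩ := hX.exists_lift hM.2.1 (x ≫ f)
  obtain ⟨v, hv⟩ := hY.exists_desc hN.2.2 (h ≫ y)
  calc x ≫ (f ≫ g ≫ h) ≫ y = u ≫ (xX ≫ g ≫ yY) ≫ v := by
        simp only [← hv, reassoc_of% hu, Category.assoc]
    _ = 0 := by rw [hg, zero_comp, comp_zero]

end WeightStructure

theorem stmt16_general (w : WeightStructure C) (m n : ℤ)
    {M N : C} (a : M ⟶ N) (b : N ⟶ M) (hab : a ≫ b = 𝟙 M)
    (hN : N ∈ w.without m n) : M ∈ w.without m n := by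
  have hM := WeightStructure.KillsWeights.comp_comp hN a b
  rwa [Category.id_comp, hab] at hM

/-- The class of objects without weights `m, …, n` is closed under retracts. -/
theorem stmt16 [HasCoproducts.{v} C] (w : WeightStructure C) (m n : ℤ)
    (hmn : m ≤ n) {M N : C} (a : M ⟶ N) (b : N ⟶ M) (hab : a ≫ b = 𝟙 M)
    (hN : N ∈ w.without m n) : M ∈ w.without m n :=
  stmt16_general w m n a b hab hN
end
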